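/- Let G = (V, E⁺, E⁰) be a fuzzy graph with weight function ω that is fuzzy c-closed, and let k ≥ 1, c ≥ 1 be integers. Assume: (i) every vertex of V has fewer than c fuzzy neighbors or at most 2kc real neighbors; (ii) there is no pair with {u,v} ∈ E⁻ and |N⁺(u) ∩ N⁺(v)| > k; (iii) there is no fuzzy edge {u,v} with |N⁰(u) ∩ N⁰(v)| < c and |N⁺(u) ∩ N⁺(v)| > k; (iv) there is no clique in G⁽⁺⁾ with at least 3kc + 2 vertices; (v) there is no nonempty clique K in G⁽⁺⁾ together with a set X of more than 2k + c + 1 vertices that is a clique in G⁽⁰⁾ and satisfies N⁺(v) = K for every v ∈ X. Let 𝒞 be a clustering of G of cost at most k and let C ∈ 𝒞 be a cluster that induces a connected subgraph of G⁽⁺⁾. Then |C| ≤ 3kc² + 3kc + 3k + 3c + 3. -/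

import Mathlib

open Finset

/-- A fuzzy graph: a finite vertex set with disjoint symmetric irreflexive sets of
'real' edges and 'fuzzy' edges; remaining pairs of distinct vertices are 'nonedges'. -/
structure FuzzyGraph (V : Type*) where
  real : V → V → Bool
  fuzzy : V → V → Bool
  real_symm : ∀ u v, real u v = real v u
  fuzzy_symm : ∀ u v, fuzzy u v = fuzzy v u
  real_irrefl : ∀ v, real v v = false
  fuzzy_irrefl : ∀ v, fuzzy v v = false
  not_real_and_fuzzy : ∀ u v, ¬(real u v = true ∧ fuzzy u v = true)

namespace FuzzyGraph

variable {V : Type*}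

/-- The pair `{u,v}` is a nonedge: distinct, neither a real nor a fuzzy edge. -/
def nonedge (G : FuzzyGraph V) (u v : V) : Prop :=
  u ≠ v ∧ ¬G.real u v ∧ ¬G.fuzzy u v

instance (G : FuzzyGraph V) [DecidableEq V] (u v : V) : Decidable (G.nonedge u v) :=
  inferInstanceAs (Decidable (u ≠ v ∧ ¬G.real u v ∧ ¬G.fuzzy u v))

/-- The simple graph `G⁽⁺⁾` of real edges. -/
def plus (G : FuzzyGraph V) : SimpleGraph V where
  Adj u v := G.real u v
  symm := by constructor; intro u v h; rwa [G.real_symm] at h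
  loopless := by constructor; intro v h; rw [G.real_irrefl] at h; exact Bool.noConfusion h

/-- The simple graph `G⁽⁰⁾` of fuzzy edges. -/
def zero (G : FuzzyGraph V) : SimpleGraph V where
  Adj u v := G.fuzzy u v
  symm := by constructor; intro u v h; rwa [G.fuzzy_symm] at h
  loopless := by constructor; intro v h; rw [G.fuzzy_irrefl] at h; exact Bool.noConfusion h

variable [Fintype V] [DecidableEq V]

/-- The real neighborhood `N⁺(v)`. -/
def realNbrs (G : FuzzyGraph V) (v : V) : Finset V := univ.filter fun u => G.real v u

/-- The fuzzy neighborhood `N⁰(v)`. -/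
def fuzzyNbrs (G : FuzzyGraph V) (v : V) : Finset V := univ.filter fun u => G.fuzzy v u

/-- The nonneighborhood `N⁻(v)`. -/
def nonNbrs (G : FuzzyGraph V) (v : V) : Finset V := univ.filter fun u => G.nonedge v u

/-- The closed real neighborhood `N⁺[v]`. -/
def closedRealNbrs (G : FuzzyGraph V) (v : V) : Finset V := insert v (G.realNbrs v)

end FuzzyGraph

/-- `ω` is a valid weight function for `G`: symmetric nonnegative integer weights,
zero exactly on the fuzzy edges. -/
def IsWeight {V : Type*} [Fintype V] [DecidableEq V] (G : FuzzyGraph V) (ω : V → V → ℕ) : Prop :=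
  (∀ u v, ω u v = ω v u) ∧ ∀ u v : V, u ≠ v → (ω u v = 0 ↔ G.fuzzy u v)

/-- The unit weight function: weight 1 on real edges and nonedges, 0 on fuzzy edges. -/
def unitW {V : Type*} (G : FuzzyGraph V) : V → V → ℕ := fun u v => if G.fuzzy u v then 0 else 1

/-- Two vertices lie in a common cluster of the clustering `𝒞`. -/
def together {V : Type*} [Fintype V] [DecidableEq V] (𝒞 : Finpartition (univ : Finset V))
    (u v : V) : Prop :=
  ∃ C ∈ 𝒞.parts, u ∈ C ∧ v ∈ C

instance {V : Type*} [Fintype V] [DecidableEq V] (𝒞 : Finpartition (univ : Finset V)) (u v : V) :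
    Decidable (together 𝒞 u v) :=
  inferInstanceAs (Decidable (∃ C ∈ 𝒞.parts, u ∈ C ∧ v ∈ C))

/-- The cost of a clustering: total weight of real edges between different clusters
plus total weight of nonedges inside clusters.  (Each unordered pair is counted twice
in the sum over ordered pairs, whence the division by 2.) -/
def cost {V : Type*} [Fintype V] [DecidableEq V] (G : FuzzyGraph V) (ω : V → V → ℕ)
    (𝒞 : Finpartition (univ : Finset V)) : ℕ :=
  (∑ p ∈ univ.offDiag,
      ((if G.real p.1 p.2 ∧ ¬together 𝒞 p.1 p.2 then ω p.1 p.2 else 0) +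
       (if G.nonedge p.1 p.2 ∧ together 𝒞 p.1 p.2 then ω p.1 p.2 else 0))) / 2

/-- A clique in `G⁽⁺⁾`: pairwise real-adjacent vertices. -/
def IsRealClique {V : Type*} (G : FuzzyGraph V) (K : Finset V) : Prop :=
  ∀ u ∈ K, ∀ v ∈ K, u ≠ v → G.real u v

/-- A clique in `G⁽⁰⁾`: pairwise fuzzy-adjacent vertices. -/
def IsFuzzyClique {V : Type*} (G : FuzzyGraph V) (K : Finset V) : Prop :=
  ∀ u ∈ K, ∀ v ∈ K, u ≠ v → G.fuzzy u v

/-- A critical clique of `G⁽⁺⁾`: a clique with `⋂_{x ∈ K} N⁺[x] = ⋃_{x ∈ K} N⁺[x]`,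
inclusion-wise maximal with this property. -/
def IsCriticalClique {V : Type*} [Fintype V] [DecidableEq V] (G : FuzzyGraph V)
    (K : Finset V) : Prop :=
  IsRealClique G K ∧ K.inf (G.closedRealNbrs) = K.sup (G.closedRealNbrs) ∧
    ∀ K' : Finset V, K ⊆ K' → IsRealClique G K' →
      K'.inf (G.closedRealNbrs) = K'.sup (G.closedRealNbrs) → K' = K

/-- A simple graph is `c`-closed if every pair of distinct nonadjacent vertices has
fewer than `c` common neighbors. -/
def IsCClosed {V : Type*} (H : SimpleGraph V) (c : ℕ) : Prop :=
  ∀ u v : V, u ≠ v → ¬H.Adj u v → Set.ncard {w | H.Adj u w ∧ H.Adj v w} < c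

/-- A fuzzy graph is fuzzy `c`-closed if its fuzzy edge graph `G⁽⁰⁾` is `c`-closed. -/
def FuzzyCClosed {V : Type*} [Fintype V] [DecidableEq V] (G : FuzzyGraph V) (c : ℕ) : Prop :=
  ∀ u v : V, u ≠ v → ¬G.fuzzy u v → ((G.fuzzyNbrs u) ∩ (G.fuzzyNbrs v)).card < c

/-!
Assume the cluster `C` is larger than the bound. Apart from the at most `2k + 1` vertices lying on
a nonedge inside `C`, every pair of vertices of `C` is a real or a fuzzy edge. Among those
vertices, the ones of fuzzy degree `< c` form a real clique by (iii), and the others have real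
degree `≤ 2kc` by (i) and so form a fuzzy clique by `c`-closedness. Dropping the at most `k`
vertices with a real neighbour outside `C` leaves a fuzzy clique `B` whose real neighbourhood `W`
is a nonempty real clique, so `|W| ≤ 3kc + 1`. At most `|W|(c - 1) + k` vertices of `B` have a
real neighbourhood other than `W`, and by (v) at most `2k + c + 1` have exactly `W`; adding up
contradicts the size of `C`.
-/

lemma Finset.card_le_card_inter_add_card_add_card {α : Type*} [DecidableEq α]
    {S X Y A B : Finset α} (hA : S \ X ⊆ A) (hB : S \ Y ⊆ B) :
    S.card ≤ (A ∩ B).card + X.card + Y.card := by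
  have hcover : S ⊆ A ∩ B ∪ X ∪ Y := fun z hz => by
    by_cases hX : z ∈ X
    · simp [hX]
    by_cases hY : z ∈ Y
    · simp [hY]
    exact mem_union_left _ (mem_union_left _
      (mem_inter.2 ⟨hA (mem_sdiff.2 ⟨hz, hX⟩), hB (mem_sdiff.2 ⟨hz, hY⟩)⟩))
  calc S.card ≤ (A ∩ B ∪ X ∪ Y).card := card_le_card hcover
    _ ≤ (A ∩ B).card + X.card + Y.card :=
      (card_union_le _ _).trans (Nat.add_le_add_right (card_union_le _ _) _)

namespace FuzzyGraph

variable {V : Type*} {G : FuzzyGraph V} {u v : V}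

lemma real_comm : G.real u v ↔ G.real v u := by
  rw [G.real_symm]

lemma fuzzy_comm : G.fuzzy u v ↔ G.fuzzy v u := by
  rw [G.fuzzy_symm]

lemma nonedge_comm : G.nonedge u v ↔ G.nonedge v u := by
  simp only [nonedge, ne_comm, real_comm, fuzzy_comm]

lemma ne_of_real (h : G.real u v) : u ≠ v := by
  rintro rfl
  simp [G.real_irrefl] at h

lemma not_fuzzy_of_real (h : G.real u v) : ¬G.fuzzy u v :=
  fun hf => G.not_real_and_fuzzy u v ⟨h, hf⟩

lemma real_or_fuzzy_or_nonedge (h : u ≠ v) : G.real u v ∨ G.fuzzy u v ∨ G.nonedge u v := by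
  by_cases hr : G.real u v
  · exact .inl hr
  by_cases hf : G.fuzzy u v
  · exact .inr (.inl hf)
  exact .inr (.inr ⟨h, hr, hf⟩)

lemma _root_.IsFuzzyClique.notMem_of_real {B : Finset V} {x : V} (hB : IsFuzzyClique G B)
    (hu : u ∈ B) (hux : G.real u x) : x ∉ B :=
  fun hx => not_fuzzy_of_real hux (hB u hu x hx (ne_of_real hux))

lemma exists_real_of_connected_induce {C : Finset V}
    (hconn : (SimpleGraph.induce (↑C : Set V) G.plus).Connected) (hC : 1 < C.card) {u : V}
    (hu : u ∈ C) : ∃ w ∈ C, G.real u w := by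
  have : Nontrivial (↑C : Set V) := (one_lt_card_iff_nontrivial.1 hC).coe.coe_sort
  obtain ⟨w, hw⟩ := hconn.preconnected.exists_adj_of_nontrivial ⟨u, hu⟩
  exact ⟨w, w.2, hw⟩

variable [Fintype V]

@[simp]
lemma mem_realNbrs : v ∈ G.realNbrs u ↔ G.real u v := by
  simp [realNbrs]

@[simp]
lemma mem_fuzzyNbrs : v ∈ G.fuzzyNbrs u ↔ G.fuzzy u v := by
  simp [fuzzyNbrs]

end FuzzyGraph

section Cost

variable {V : Type*} [Fintype V] [DecidableEq V] {G : FuzzyGraph V} {ω : V → V → ℕ}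
  {𝒞 : Finpartition (univ : Finset V)}

def IsDisagreement (G : FuzzyGraph V) (𝒞 : Finpartition (univ : Finset V)) (p : V × V) : Prop :=
  (G.real p.1 p.2 ∧ ¬together 𝒞 p.1 p.2) ∨ (G.nonedge p.1 p.2 ∧ together 𝒞 p.1 p.2)

lemma together_comm {u v : V} : together 𝒞 u v ↔ together 𝒞 v u := by
  simp only [together, and_comm]

lemma IsDisagreement.swap {p : V × V} (h : IsDisagreement G 𝒞 p) : IsDisagreement G 𝒞 p.swap := by
  simpa only [IsDisagreement, Prod.fst_swap, Prod.snd_swap, FuzzyGraph.real_comm,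
    FuzzyGraph.nonedge_comm, together_comm] using h

lemma card_le_two_mul_cost_add_one (hω : IsWeight G ω) {P : Finset (V × V)}
    (hP : ∀ p ∈ P, IsDisagreement G 𝒞 p) : P.card ≤ 2 * cost G ω 𝒞 + 1 := by
  set f : V × V → ℕ := fun p => (if G.real p.1 p.2 ∧ ¬together 𝒞 p.1 p.2 then ω p.1 p.2 else 0) +
    (if G.nonedge p.1 p.2 ∧ together 𝒞 p.1 p.2 then ω p.1 p.2 else 0)
  have hne : ∀ p ∈ P, p.1 ≠ p.2 := fun p hp => by
    rcases hP p hp with ⟨hr, -⟩ | ⟨hn, -⟩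
    exacts [FuzzyGraph.ne_of_real hr, hn.1]
  have hpos : ∀ p ∈ P, 1 ≤ f p := fun p hp => by
    have hω0 : ω p.1 p.2 ≠ 0 := fun h0 => by
      have hf := (hω.2 _ _ (hne p hp)).1 h0
      rcases hP p hp with ⟨hr, -⟩ | ⟨hn, -⟩
      exacts [FuzzyGraph.not_fuzzy_of_real hr hf, hn.2.2 hf]
    rcases hP p hp with h | h
    · have : ¬(G.nonedge p.1 p.2 ∧ together 𝒞 p.1 p.2) := fun h' => h'.1.2.1 h.1
      simp only [f, if_pos h, if_neg this]
      omega
    · have : ¬(G.real p.1 p.2 ∧ ¬together 𝒞 p.1 p.2) := fun h' => h.1.2.1 h'.1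
      simp only [f, if_pos h, if_neg this]
      omega
  have hsub : P ⊆ univ.offDiag := fun p hp => by simpa using hne p hp
  have hsum : ∑ p ∈ univ.offDiag, f p ≤ 2 * cost G ω 𝒞 + 1 := by
    simp only [cost, f]
    omega
  calc P.card = ∑ _p ∈ P, 1 := by simp
    _ ≤ ∑ p ∈ P, f p := sum_le_sum hpos
    _ ≤ ∑ p ∈ univ.offDiag, f p := sum_le_sum_of_subset hsub
    _ ≤ 2 * cost G ω 𝒞 + 1 := hsum

/-- Every disagreement is charged in both orientations. -/
lemma card_le_cost_of_disjoint_swap (hω : IsWeight G ω) {P : Finset (V × V)}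
    (hP : ∀ p ∈ P, IsDisagreement G 𝒞 p) (hdisj : Disjoint P (P.image Prod.swap)) :
    P.card ≤ cost G ω 𝒞 := by
  have hswap : (P.image Prod.swap).card = P.card := card_image_of_injective _ Prod.swap_injective
  have hall : ∀ p ∈ P ∪ P.image Prod.swap, IsDisagreement G 𝒞 p := by
    simp only [mem_union, mem_image]
    rintro p (hp | ⟨q, hq, rfl⟩)
    exacts [hP p hp, (hP q hq).swap]
  have := card_le_two_mul_cost_add_one hω hall
  rw [card_union_of_disjoint hdisj, hswap] at this
  omega

variable {C : Finset V} (hC : C ∈ 𝒞.parts)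
include hC

lemma together_iff_mem {u v : V} (hu : u ∈ C) : together 𝒞 u v ↔ v ∈ C := by
  refine ⟨fun ⟨C', hC', hu', hv'⟩ => ?_, fun hv => ⟨C, hC, hu, hv⟩⟩
  rwa [𝒞.eq_of_mem_parts hC hC' hu hu']

lemma card_nonedge_pairs_le_cost (hω : IsWeight G ω) {S T : Finset V} (hS : S ⊆ C)
    (hT : T ⊆ C) (hST : Disjoint S T) :
    ((S ×ˢ T).filter fun p => G.nonedge p.1 p.2).card ≤ cost G ω 𝒞 := by
  refine card_le_cost_of_disjoint_swap hω (fun p hp => ?_) ?_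
  · simp only [mem_filter, mem_product] at hp
    exact .inr ⟨hp.2, (together_iff_mem hC (hS hp.1.1)).2 (hT hp.1.2)⟩
  · simp only [disjoint_left, mem_image, mem_filter, mem_product]
    rintro p hp ⟨q, hq, rfl⟩
    exact disjoint_left.1 hST hp.1.1 hq.1.2

lemma card_filter_exists_real_not_mem_le_cost (hω : IsWeight G ω) :
    (C.filter fun u => ∃ w, w ∉ C ∧ G.real u w).card ≤ cost G ω 𝒞 := by
  set P := (C ×ˢ Cᶜ).filter fun p => G.real p.1 p.2
  have hP : P.card ≤ cost G ω 𝒞 := by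
    refine card_le_cost_of_disjoint_swap hω (fun p hp => ?_) ?_
    · simp only [P, mem_filter, mem_product, mem_compl] at hp
      exact .inl ⟨hp.2, fun h => hp.1.2 ((together_iff_mem hC hp.1.1).1 h)⟩
    · simp only [P, disjoint_left, mem_image, mem_filter, mem_product, mem_compl]
      rintro p hp ⟨q, hq, rfl⟩
      exact hq.1.2 hp.1.1
  refine (card_le_card fun u hu => ?_).trans ((card_image_le (f := Prod.fst)).trans hP)
  obtain ⟨huC, w, hwC, hr⟩ := mem_filter.1 hu
  exact mem_image.2 ⟨(u, w), by simp [P, huC, hwC, hr], rfl⟩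

lemma card_filter_exists_nonedge_le (hω : IsWeight G ω) :
    (C.filter fun u => ∃ w ∈ C, G.nonedge u w).card ≤ 2 * cost G ω 𝒞 + 1 := by
  set P := (C ×ˢ C).filter fun p => G.nonedge p.1 p.2
  have hP : P.card ≤ 2 * cost G ω 𝒞 + 1 := by
    refine card_le_two_mul_cost_add_one hω fun p hp => ?_
    simp only [P, mem_filter, mem_product] at hp
    exact .inr ⟨hp.2, (together_iff_mem hC hp.1.1).2 hp.1.2⟩
  refine (card_le_card fun u hu => ?_).trans ((card_image_le (f := Prod.fst)).trans hP)
  obtain ⟨huC, w, hwC, hn⟩ := mem_filter.1 hu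
  exact mem_image.2 ⟨(u, w), by simp [P, huC, hwC, hn], rfl⟩

end Cost

namespace FuzzyGraph

variable {V : Type*} [Fintype V] [DecidableEq V] {G : FuzzyGraph V} {c k : ℕ}
  {S B : Finset V} {u x : V}

@[simp]
lemma mem_nonNbrs : x ∈ G.nonNbrs u ↔ G.nonedge u x := by
  simp [nonNbrs]

lemma sdiff_insert_fuzzyNbrs_subset_realNbrs (hu : ∀ w ∈ S, ¬G.nonedge u w) :
    S \ insert u (G.fuzzyNbrs u) ⊆ G.realNbrs u := fun w hw => by
  simp only [mem_sdiff, mem_insert, mem_fuzzyNbrs, not_or] at hw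
  obtain ⟨hwS, hwu, hf⟩ := hw
  rcases real_or_fuzzy_or_nonedge (Ne.symm hwu) with h | h | h
  exacts [mem_realNbrs.2 h, absurd h hf, absurd h (hu w hwS)]

lemma sdiff_insert_realNbrs_subset_fuzzyNbrs (hu : ∀ w ∈ S, ¬G.nonedge u w) :
    S \ insert u (G.realNbrs u) ⊆ G.fuzzyNbrs u := fun w hw => by
  simp only [mem_sdiff, mem_insert, mem_realNbrs, not_or] at hw
  obtain ⟨hwS, hwu, hr⟩ := hw
  rcases real_or_fuzzy_or_nonedge (Ne.symm hwu) with h | h | h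
  exacts [absurd h hr, mem_fuzzyNbrs.2 h, absurd h (hu w hwS)]

lemma isRealClique_of_card_fuzzyNbrs_lt
    (h3 : ∀ u v : V, G.fuzzy u v → ((G.fuzzyNbrs u) ∩ (G.fuzzyNbrs v)).card < c →
      ((G.realNbrs u) ∩ (G.realNbrs v)).card ≤ k)
    (hS : ∀ u ∈ S, ∀ w ∈ S, ¬G.nonedge u w) (hlarge : k + 2 * c < S.card) {A : Finset V}
    (hAS : A ⊆ S) (hA : ∀ u ∈ A, (G.fuzzyNbrs u).card < c) : IsRealClique G A := by
  intro u hu v hv huv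
  by_contra hr
  have hf : G.fuzzy u v := by
    rcases real_or_fuzzy_or_nonedge huv with h | h | h
    exacts [absurd h hr, h, absurd h (hS u (hAS hu) v (hAS hv))]
  have hcommon := h3 u v hf ((card_le_card inter_subset_left).trans_lt (hA u hu))
  have := card_le_card_inter_add_card_add_card
    (sdiff_insert_fuzzyNbrs_subset_realNbrs (hS u (hAS hu)))
    (sdiff_insert_fuzzyNbrs_subset_realNbrs (hS v (hAS hv)))
  have := card_insert_le u (G.fuzzyNbrs u)
  have := card_insert_le v (G.fuzzyNbrs v)
  have := hA u hu
  have := hA v hv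
  omega

lemma isFuzzyClique_of_card_realNbrs_le (hcl : FuzzyCClosed G c)
    (hS : ∀ u ∈ S, ∀ w ∈ S, ¬G.nonedge u w) {d : ℕ} (hlarge : c + 2 * (d + 1) ≤ S.card)
    (hBS : B ⊆ S) (hB : ∀ u ∈ B, (G.realNbrs u).card ≤ d) : IsFuzzyClique G B := by
  intro u hu v hv huv
  by_contra hf
  have hcommon := hcl u v huv hf
  have := card_le_card_inter_add_card_add_card
    (sdiff_insert_realNbrs_subset_fuzzyNbrs (hS u (hBS hu)))
    (sdiff_insert_realNbrs_subset_fuzzyNbrs (hS v (hBS hv)))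
  have := card_insert_le u (G.realNbrs u)
  have := card_insert_le v (G.realNbrs v)
  have := hB u hu
  have := hB v hv
  omega

lemma card_inter_fuzzyNbrs_lt (hcl : FuzzyCClosed G c) (hB : IsFuzzyClique G B) (hu : u ∈ B)
    (hxu : G.real x u) : (B ∩ G.fuzzyNbrs x).card < c := by
  refine (card_le_card fun w hw => ?_).trans_lt (hcl x u (ne_of_real hxu) (not_fuzzy_of_real hxu))
  obtain ⟨hwB, hxw⟩ := mem_inter.1 hw
  have hwu : w ≠ u := by
    rintro rfl
    exact not_fuzzy_of_real hxu (mem_fuzzyNbrs.1 hxw)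
  exact mem_inter.2 ⟨hxw, mem_fuzzyNbrs.2 (hB u hu w hwB hwu.symm)⟩

lemma card_le_card_inter_realNbrs_add (hx : x ∉ B) :
    B.card ≤ (B ∩ G.realNbrs x).card + (B ∩ G.fuzzyNbrs x).card + (B ∩ G.nonNbrs x).card := by
  have hcover : B ⊆ (B ∩ G.realNbrs x) ∪ (B ∩ G.fuzzyNbrs x) ∪ (B ∩ G.nonNbrs x) :=
    fun w hw => by
      have hxw : x ≠ w := fun h => hx (h ▸ hw)
      rcases real_or_fuzzy_or_nonedge (G := G) hxw with h | h | h <;> simp [hw, h]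
  exact (card_le_card hcover).trans
    ((card_union_le _ _).trans (Nat.add_le_add_right (card_union_le _ _) _))

lemma card_inter_nonNbrs_le {W : Finset V} (hx : x ∈ W) :
    (B ∩ G.nonNbrs x).card ≤ ((W ×ˢ B).filter fun p => G.nonedge p.1 p.2).card :=
  card_le_card_of_injOn (fun w => (x, w)) (fun w hw => by simp_all)
    (fun _ _ _ _ h => (Prod.mk.inj h).2)

/-- Each real neighbour `x` of the fuzzy clique `B` is real-adjacent to all but fewer than
`c + k` vertices of `B`, so two of them share too many real neighbours to be non-adjacent. -/
lemma isRealClique_biUnion_realNbrs (hcl : FuzzyCClosed G c)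
    (h1 : ∀ v : V, (G.fuzzyNbrs v).card < c ∨ (G.realNbrs v).card ≤ 2 * k * c)
    (h2 : ∀ u v : V, G.nonedge u v → ((G.realNbrs u) ∩ (G.realNbrs v)).card ≤ k)
    (h3 : ∀ u v : V, G.fuzzy u v → ((G.fuzzyNbrs u) ∩ (G.fuzzyNbrs v)).card < c →
      ((G.realNbrs u) ∩ (G.realNbrs v)).card ≤ k)
    (hB : IsFuzzyClique G B)
    (hnon : ((B.biUnion G.realNbrs ×ˢ B).filter fun p => G.nonedge p.1 p.2).card ≤ k)
    (hlarge₁ : 2 * c + 3 * k ≤ B.card + 1) (hlarge₂ : 2 * k * c + c + k ≤ B.card) :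
    IsRealClique G (B.biUnion G.realNbrs) := by
  have hreal : ∀ x ∈ B.biUnion G.realNbrs, B.card < (B ∩ G.realNbrs x).card + c + k := by
    intro x hx
    obtain ⟨u, hu, hux⟩ := mem_biUnion.1 hx
    have hux := mem_realNbrs.1 hux
    have := card_le_card_inter_realNbrs_add (G := G) (hB.notMem_of_real hu hux)
    have := card_inter_fuzzyNbrs_lt hcl hB hu (real_comm.1 hux)
    have := (card_inter_nonNbrs_le hx).trans hnon
    omega
  intro x hx y hy hxy
  by_contra hr
  have hcommon : k < ((G.realNbrs x) ∩ (G.realNbrs y)).card := by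
    have hsub : (B ∩ G.realNbrs x) ∩ (B ∩ G.realNbrs y) ⊆ G.realNbrs x ∩ G.realNbrs y :=
      inter_subset_inter inter_subset_right inter_subset_right
    have hunion : ((B ∩ G.realNbrs x) ∪ (B ∩ G.realNbrs y)).card ≤ B.card :=
      card_le_card (union_subset inter_subset_left inter_subset_left)
    have := card_union_add_card_inter (B ∩ G.realNbrs x) (B ∩ G.realNbrs y)
    have := card_le_card hsub
    have := hreal x hx
    have := hreal y hy
    omega
  rcases real_or_fuzzy_or_nonedge hxy with h | h | h
  · exact hr h
  · have hdeg : 2 * k * c < (G.realNbrs x).card := by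
      have := card_le_card (inter_subset_right (s₁ := B) (s₂ := G.realNbrs x))
      have := hreal x hx
      omega
    have hfx : (G.fuzzyNbrs x).card < c := (h1 x).resolve_right (by omega)
    have := h3 x y h ((card_le_card inter_subset_left).trans_lt hfx)
    omega
  · have := h2 x y h
    omega

/-- A vertex `u` of the fuzzy clique `B` with `N⁺(u) ≠ ⋃_{v ∈ B} N⁺(v)` misses a real neighbour
`x` of `B`; the pair `{x, u}` is then fuzzy or a nonedge. -/
lemma card_filter_realNbrs_ne_le (hcl : FuzzyCClosed G c) (hB : IsFuzzyClique G B) :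
    (B.filter fun u => G.realNbrs u ≠ B.biUnion G.realNbrs).card ≤
      (B.biUnion G.realNbrs).card * (c - 1) +
        ((B.biUnion G.realNbrs ×ˢ B).filter fun p => G.nonedge p.1 p.2).card := by
  set W := B.biUnion G.realNbrs
  set P := (W ×ˢ B).filter fun p => G.nonedge p.1 p.2
  have hcover : (B.filter fun u => G.realNbrs u ≠ W) ⊆
      W.biUnion (fun x => B ∩ G.fuzzyNbrs x) ∪ P.image Prod.snd := by
    intro u hu
    obtain ⟨huB, hne⟩ := mem_filter.1 hu
    obtain ⟨x, hxW, hxu⟩ :=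
      exists_of_ssubset ((subset_biUnion_of_mem G.realNbrs huB).ssubset_of_ne hne)
    obtain ⟨v, hv, hvx⟩ := mem_biUnion.1 hxW
    have hxu' : x ≠ u := fun h => hB.notMem_of_real hv (mem_realNbrs.1 hvx) (h ▸ huB)
    rcases real_or_fuzzy_or_nonedge hxu' with h | h | h
    · exact absurd (mem_realNbrs.2 (real_comm.1 h)) hxu
    · exact mem_union_left _ (mem_biUnion.2 ⟨x, hxW, mem_inter.2 ⟨huB, mem_fuzzyNbrs.2 h⟩⟩)
    · exact mem_union_right _
        (mem_image.2 ⟨(x, u), mem_filter.2 ⟨mem_product.2 ⟨hxW, huB⟩, h⟩, rfl⟩)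
  have hfuzzy : ∀ x ∈ W, (B ∩ G.fuzzyNbrs x).card ≤ c - 1 := fun x hx => by
    obtain ⟨v, hv, hvx⟩ := mem_biUnion.1 hx
    have := card_inter_fuzzyNbrs_lt hcl hB hv (real_comm.1 (mem_realNbrs.1 hvx))
    omega
  calc _ ≤ (W.biUnion (fun x => B ∩ G.fuzzyNbrs x) ∪ P.image Prod.snd).card := card_le_card hcover
    _ ≤ ∑ x ∈ W, (B ∩ G.fuzzyNbrs x).card + P.card :=
      (card_union_le _ _).trans (add_le_add card_biUnion_le card_image_le)
    _ ≤ W.card * (c - 1) + P.card := by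
      gcongr
      simpa using sum_le_card_nsmul W _ _ hfuzzy

/-- Fuzzy `c`-closedness together with conditions (i)–(v) of the statement. -/
structure IsReduced (G : FuzzyGraph V) (c k : ℕ) : Prop where
  fuzzyCClosed : FuzzyCClosed G c
  card_fuzzyNbrs_lt_or_card_realNbrs_le :
    ∀ v : V, (G.fuzzyNbrs v).card < c ∨ (G.realNbrs v).card ≤ 2 * k * c
  card_inter_realNbrs_le_of_nonedge :
    ∀ u v : V, G.nonedge u v → ((G.realNbrs u) ∩ (G.realNbrs v)).card ≤ k
  card_inter_realNbrs_le_of_fuzzy : ∀ u v : V, G.fuzzy u v →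
    ((G.fuzzyNbrs u) ∩ (G.fuzzyNbrs v)).card < c → ((G.realNbrs u) ∩ (G.realNbrs v)).card ≤ k
  card_lt_of_isRealClique : ∀ K : Finset V, IsRealClique G K → K.card < 3 * k * c + 2
  card_le_of_realNbrs_eq : ∀ K X : Finset V, K.Nonempty → IsRealClique G K →
    IsFuzzyClique G X → (∀ v ∈ X, G.realNbrs v = K) → X.card ≤ 2 * k + c + 1

lemma IsReduced.card_le_of_isFuzzyClique (hG : G.IsReduced c k) (hB : IsFuzzyClique G B)
    (hW : (B.biUnion G.realNbrs).Nonempty)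
    (hnon : ((B.biUnion G.realNbrs ×ˢ B).filter fun p => G.nonedge p.1 p.2).card ≤ k)
    (hlarge₁ : 2 * c + 3 * k ≤ B.card + 1) (hlarge₂ : 2 * k * c + c + k ≤ B.card) :
    B.card ≤ (3 * k * c + 1) * (c - 1) + 3 * k + c + 1 := by
  have hWclique := isRealClique_biUnion_realNbrs hG.fuzzyCClosed
    hG.card_fuzzyNbrs_lt_or_card_realNbrs_le hG.card_inter_realNbrs_le_of_nonedge
    hG.card_inter_realNbrs_le_of_fuzzy hB hnon hlarge₁ hlarge₂
  have hX := hG.card_le_of_realNbrs_eq _ (B.filter fun u => G.realNbrs u = B.biUnion G.realNbrs)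
    hW hWclique (fun u hu v hv => hB u (mem_filter.1 hu).1 v (mem_filter.1 hv).1)
    fun v hv => (mem_filter.1 hv).2
  have hWc : (B.biUnion G.realNbrs).card * (c - 1) ≤ (3 * k * c + 1) * (c - 1) :=
    Nat.mul_le_mul_right _ (Nat.le_of_lt_succ (hG.card_lt_of_isRealClique _ hWclique))
  have := card_filter_realNbrs_ne_le hG.fuzzyCClosed hB
  have : (B.filter fun u => G.realNbrs u = B.biUnion G.realNbrs).card +
      (B.filter fun u => G.realNbrs u ≠ B.biUnion G.realNbrs).card = B.card :=
    card_filter_add_card_filter_not _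
  omega

variable {ω : V → V → ℕ} {𝒞 : Finpartition (univ : Finset V)} {C : Finset V}

lemma IsReduced.card_le_of_forall_not_nonedge (hG : G.IsReduced c k) (hc : 1 ≤ c)
    (hω : IsWeight G ω) (hcost : cost G ω 𝒞 ≤ k) (hC : C ∈ 𝒞.parts)
    (hconn : (SimpleGraph.induce (↑C : Set V) G.plus).Connected) {S : Finset V} (hSC : S ⊆ C)
    (hS : ∀ u ∈ S, ∀ w ∈ S, ¬G.nonedge u w)
    (hlarge : 3 * k * c ^ 2 + 3 * k * c + k + 3 * c + 3 ≤ S.card) :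
    S.card ≤ 3 * k * c ^ 2 + 4 * k + 2 * c + 1 := by
  have hkc : k ≤ k * c := Nat.le_mul_of_pos_right k hc
  have hkcc : k * c ≤ k * c ^ 2 := by nlinarith
  have hcc : (3 * k * c + 1) * (c - 1) + (3 * k * c + 1) = (3 * k * c + 1) * c := by
    rw [← Nat.mul_add_one, Nat.sub_add_cancel hc]
  set A := S.filter fun u => (G.fuzzyNbrs u).card < c
  set B := (S \ A).filter fun u => G.realNbrs u ⊆ C
  have hA : A.card < 3 * k * c + 2 := hG.card_lt_of_isRealClique A <|
    isRealClique_of_card_fuzzyNbrs_lt hG.card_inter_realNbrs_le_of_fuzzy hS (by nlinarith)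
      (filter_subset _ _) fun u hu => (mem_filter.1 hu).2
  have hSA : (S \ A).card + A.card = S.card := card_sdiff_add_card_eq_card (filter_subset _ _)
  have hout : ((S \ A).filter fun u => ¬G.realNbrs u ⊆ C).card ≤ k := by
    refine (card_le_card fun u hu => ?_).trans
      ((card_filter_exists_real_not_mem_le_cost hC hω).trans hcost)
    obtain ⟨huSA, hsub⟩ := mem_filter.1 hu
    obtain ⟨w, hw, hwC⟩ := not_subset.1 hsub
    exact mem_filter.2 ⟨hSC (mem_sdiff.1 huSA).1, w, hwC, mem_realNbrs.1 hw⟩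
  have hBA : B.card + ((S \ A).filter fun u => ¬G.realNbrs u ⊆ C).card = (S \ A).card :=
    card_filter_add_card_filter_not _
  have hBS : B ⊆ S := (filter_subset _ _).trans sdiff_subset
  have hBfuzzy : IsFuzzyClique G B := isFuzzyClique_of_card_realNbrs_le hG.fuzzyCClosed hS
    (d := 2 * k * c) (by nlinarith) hBS fun u hu =>
      (hG.card_fuzzyNbrs_lt_or_card_realNbrs_le u).resolve_left fun h =>
        (mem_sdiff.1 (mem_filter.1 hu).1).2 (mem_filter.2 ⟨hBS hu, h⟩)
  have hWB : Disjoint (B.biUnion G.realNbrs) B := disjoint_left.2 fun x hx => by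
    obtain ⟨u, hu, hux⟩ := mem_biUnion.1 hx
    exact hBfuzzy.notMem_of_real hu (mem_realNbrs.1 hux)
  have hnon := (card_nonedge_pairs_le_cost hC hω (biUnion_subset.2 fun u hu => (mem_filter.1 hu).2)
    (hBS.trans hSC) hWB).trans hcost
  obtain ⟨u, hu⟩ : B.Nonempty := card_pos.1 (by omega)
  obtain ⟨w, -, huw⟩ := exists_real_of_connected_induce hconn
    ((card_le_card hSC).trans_lt' (by omega)) (hSC (hBS hu))
  have hB := hG.card_le_of_isFuzzyClique hBfuzzy ⟨w, mem_biUnion.2 ⟨u, hu, mem_realNbrs.2 huw⟩⟩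
    hnon (by nlinarith) (by nlinarith)
  nlinarith

end FuzzyGraph

open FuzzyGraph

theorem stmt11_general {V : Type*} [Fintype V] [DecidableEq V]
    (G : FuzzyGraph V) (ω : V → V → ℕ) (hω : IsWeight G ω) (c k : ℕ) (hc : 1 ≤ c)
    (hcl : FuzzyCClosed G c)
    (h1 : ∀ v : V, (G.fuzzyNbrs v).card < c ∨ (G.realNbrs v).card ≤ 2 * k * c)
    (h2 : ∀ u v : V, G.nonedge u v → ((G.realNbrs u) ∩ (G.realNbrs v)).card ≤ k)
    (h3 : ∀ u v : V, G.fuzzy u v → ((G.fuzzyNbrs u) ∩ (G.fuzzyNbrs v)).card < c →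
      ((G.realNbrs u) ∩ (G.realNbrs v)).card ≤ k)
    (h4 : ∀ K : Finset V, IsRealClique G K → K.card < 3 * k * c + 2)
    (h5 : ∀ K X : Finset V, K.Nonempty → IsRealClique G K → IsFuzzyClique G X →
      (∀ v ∈ X, G.realNbrs v = K) → X.card ≤ 2 * k + c + 1)
    (𝒞 : Finpartition (Finset.univ : Finset V)) (hcost : cost G ω 𝒞 ≤ k)
    (C : Finset V) (hC : C ∈ 𝒞.parts)
    (hconn : (SimpleGraph.induce (↑C : Set V) G.plus).Connected) :
    C.card ≤ 3 * k * c ^ 2 + 3 * k * c + 3 * k + 3 * c + 3 := by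
  by_contra! hbig
  set D := C.filter fun u => ∃ w ∈ C, G.nonedge u w
  have hD : D.card ≤ 2 * k + 1 := (card_filter_exists_nonedge_le hC hω).trans (by omega)
  have hCD : (C \ D).card + D.card = C.card := card_sdiff_add_card_eq_card (filter_subset _ _)
  have hS : ∀ u ∈ C \ D, ∀ w ∈ C \ D, ¬G.nonedge u w := fun u hu w hw hn =>
    (mem_sdiff.1 hu).2 (mem_filter.2 ⟨(mem_sdiff.1 hu).1, w, (mem_sdiff.1 hw).1, hn⟩)
  have hkc : k ≤ k * c := Nat.le_mul_of_pos_right k hc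
  have hG : G.IsReduced c k := ⟨hcl, h1, h2, h3, h4, h5⟩
  have := hG.card_le_of_forall_not_nonedge hc hω hcost hC hconn sdiff_subset hS (by omega)
  linarith

/-- Under the stated reducedness conditions on a fuzzy `c`-closed graph,
every cluster of a clustering of cost at most `k` that induces a connected subgraph of
`G⁽⁺⁾` has at most `3kc² + 3kc + 3k + 3c + 3` vertices. -/
theorem stmt11 {V : Type*} [Fintype V] [DecidableEq V]
    (G : FuzzyGraph V) (ω : V → V → ℕ) (hω : IsWeight G ω) (c k : ℕ) (hk : 1 ≤ k) (hc : 1 ≤ c)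
    (hcl : FuzzyCClosed G c)
    (h1 : ∀ v : V, (G.fuzzyNbrs v).card < c ∨ (G.realNbrs v).card ≤ 2 * k * c)
    (h2 : ∀ u v : V, G.nonedge u v → ((G.realNbrs u) ∩ (G.realNbrs v)).card ≤ k)
    (h3 : ∀ u v : V, G.fuzzy u v → ((G.fuzzyNbrs u) ∩ (G.fuzzyNbrs v)).card < c →
      ((G.realNbrs u) ∩ (G.realNbrs v)).card ≤ k)
    (h4 : ∀ K : Finset V, IsRealClique G K → K.card < 3 * k * c + 2)
    (h5 : ∀ K X : Finset V, K.Nonempty → IsRealClique G K → IsFuzzyClique G X →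
      (∀ v ∈ X, G.realNbrs v = K) → X.card ≤ 2 * k + c + 1)
    (𝒞 : Finpartition (Finset.univ : Finset V)) (hcost : cost G ω 𝒞 ≤ k)
    (C : Finset V) (hC : C ∈ 𝒞.parts)
    (hconn : (SimpleGraph.induce (↑C : Set V) G.plus).Connected) :
    C.card ≤ 3 * k * c ^ 2 + 3 * k * c + 3 * k + 3 * c + 3 :=
  stmt11_general G ω hω c k hc hcl h1 h2 h3 h4 h5 𝒞 hcost C hC hconn
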